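/- arXiv:math/0302205 — 2 statements merged into one kernel-verified Lean document; each statement's English description precedes it below -/
import Mathlib

section
/- Let M and N be smooth manifolds (without boundary, modelled on finite-dimensional real normed spaces via models with corners I and I'), and let π : M → N be a smooth map. Let V, W be smooth vector fields on M (sections p ↦ V p ∈ TangentSpace I p) and X, Y smooth vector fields on N, such that V is π-related to X and W is π-related to Y, i.e. for every p ∈ M, mfderiv I I' π p (V p) = X (π p) and mfderiv I I' π p (W p) = Y (π p). Then the Lie bracket [V,W] is π-related to [X,Y]: for every p ∈ M, mfderiv I I' π p ((mlieBracket I V W) p) = (mlieBracket I' X Y) (π p). -/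
open Manifold Set

noncomputable section

/-- The pullback of a vector field under a map, within a set `s`, defined as the preimage of the
vector field under the derivative of the map.  (This is Mathlib's
`VectorField.mpullbackWithin`, reproduced here since it is not yet available
in this version of Mathlib.) -/
def mpullbackWithin {𝕜 : Type*} [NontriviallyNormedField 𝕜]
    {E : Type*} [NormedAddCommGroup E] [NormedSpace 𝕜 E]
    {H : Type*} [TopologicalSpace H] (I : ModelWithCorners 𝕜 E H)
    {M : Type*} [TopologicalSpace M] [ChartedSpace H M]
    {E' : Type*} [NormedAddCommGroup E'] [NormedSpace 𝕜 E']
    {H' : Type*} [TopologicalSpace H'] (I' : ModelWithCorners 𝕜 E' H')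
    {M' : Type*} [TopologicalSpace M'] [ChartedSpace H' M']
    (f : M → M') (V : ∀ x : M', TangentSpace I' x) (s : Set M) (x : M) :
    TangentSpace I x :=
  (mfderivWithin I I' f s x).inverse (V (f x))

/-- The Lie bracket of two vector fields on a manifold, within a set `s`, read through the
extended chart at the base point.  (This is Mathlib's `VectorField.mlieBracketWithin`,
reproduced here since it is not yet available in this version of Mathlib.) -/
def mlieBracketWithin {𝕜 : Type*} [NontriviallyNormedField 𝕜]
    {E : Type*} [NormedAddCommGroup E] [NormedSpace 𝕜 E]
    {H : Type*} [TopologicalSpace H] (I : ModelWithCorners 𝕜 E H)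
    {M : Type*} [TopologicalSpace M] [ChartedSpace H M]
    (V W : ∀ x : M, TangentSpace I x) (s : Set M) (x₀ : M) :
    TangentSpace I x₀ :=
  mpullbackWithin I 𝓘(𝕜, E) (extChartAt I x₀)
    (VectorField.lieBracketWithin 𝕜
      (mpullbackWithin 𝓘(𝕜, E) I (extChartAt I x₀).symm V
        ((extChartAt I x₀).symm ⁻¹' s ∩ range I))
      (mpullbackWithin 𝓘(𝕜, E) I (extChartAt I x₀).symm W
        ((extChartAt I x₀).symm ⁻¹' s ∩ range I))
      ((extChartAt I x₀).symm ⁻¹' s ∩ range I))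
    s x₀

/-- The Lie bracket of two vector fields on a manifold.
(This is Mathlib's `VectorField.mlieBracket`, reproduced here since it is not yet
available in this version of Mathlib.) -/
def mlieBracket {𝕜 : Type*} [NontriviallyNormedField 𝕜]
    {E : Type*} [NormedAddCommGroup E] [NormedSpace 𝕜 E]
    {H : Type*} [TopologicalSpace H] (I : ModelWithCorners 𝕜 E H)
    {M : Type*} [TopologicalSpace M] [ChartedSpace H M]
    (V W : ∀ x : M, TangentSpace I x) (x₀ : M) :
    TangentSpace I x₀ :=
  mlieBracketWithin I V W univ x₀

open Filter
open scoped Topology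


section FlatAux

variable {E : Type*} [NormedAddCommGroup E] [NormedSpace ℝ E]
    {F : Type*} [NormedAddCommGroup F] [NormedSpace ℝ F]

/-- Flat version of the main theorem: if `V` is `f`-related to `X` and `W` is `f`-related to `Y`
near `a` (in the sense of `fderiv`), then the Lie bracket of `V, W` is related to that of
`X, Y` at `a`. -/
lemma flat_bracket_related {f : E → F} {V W : E → E} {X Y : F → F} {a : E}
    (hf : ContDiffAt ℝ 2 f a)
    (hV : DifferentiableAt ℝ V a) (hW : DifferentiableAt ℝ W a)
    (hX : DifferentiableAt ℝ X (f a)) (hY : DifferentiableAt ℝ Y (f a))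
    (hVX : ∀ᶠ y in 𝓝 a, fderiv ℝ f y (V y) = X (f y))
    (hWY : ∀ᶠ y in 𝓝 a, fderiv ℝ f y (W y) = Y (f y)) :
    fderiv ℝ f a (VectorField.lieBracket ℝ V W a) = VectorField.lieBracket ℝ X Y (f a) := by
  have hfd : DifferentiableAt ℝ f a := hf.differentiableAt two_ne_zero
  have hdf : DifferentiableAt ℝ (fderiv ℝ f) a := by
    have := hf.fderiv_right (m := 1) (by norm_num)
    exact this.differentiableAt one_ne_zero
  have hsymm : IsSymmSndFDerivAt ℝ f a := hf.isSymmSndFDerivAt (by simp)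
  have EW : fderiv ℝ (fun y => fderiv ℝ f y (W y)) a = fderiv ℝ (fun y => Y (f y)) a :=
    Filter.EventuallyEq.fderiv_eq hWY
  have EV : fderiv ℝ (fun y => fderiv ℝ f y (V y)) a = fderiv ℝ (fun y => X (f y)) a :=
    Filter.EventuallyEq.fderiv_eq hVX
  rw [fderiv_clm_apply hdf hW, fderiv_comp' a hY hfd] at EW
  rw [fderiv_clm_apply hdf hV, fderiv_comp' a hX hfd] at EV
  have hVa : fderiv ℝ f a (V a) = X (f a) := hVX.self_of_nhds
  have hWa : fderiv ℝ f a (W a) = Y (f a) := hWY.self_of_nhds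
  have EW' := congrArg (fun L : E →L[ℝ] F => L (V a)) EW
  have EV' := congrArg (fun L : E →L[ℝ] F => L (W a)) EV
  simp only [ContinuousLinearMap.add_apply, ContinuousLinearMap.comp_apply,
    ContinuousLinearMap.flip_apply, hVa, hWa] at EW' EV'
  have hs := hsymm (V a) (W a)
  simp only [VectorField.lieBracket, map_sub]
  rw [show fderiv ℝ f a (fderiv ℝ W a (V a)) =
      fderiv ℝ Y (f a) (X (f a)) - fderiv ℝ (fderiv ℝ f) a (V a) (W a) by
    linear_combination (norm := abel) EW']
  rw [show fderiv ℝ f a (fderiv ℝ V a (W a)) =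
      fderiv ℝ X (f a) (Y (f a)) - fderiv ℝ (fderiv ℝ f) a (W a) (V a) by
    linear_combination (norm := abel) EV']
  rw [hs]
  abel

end FlatAux

section ManifoldAux

variable {E : Type*} [NormedAddCommGroup E] [NormedSpace ℝ E]
    {H : Type*} [TopologicalSpace H] {I : ModelWithCorners ℝ E H}
    {M : Type*} [TopologicalSpace M] [ChartedSpace H M] [IsManifold I ((⊤ : ℕ∞) : WithTop ℕ∞) M]
    {E' : Type*} [NormedAddCommGroup E'] [NormedSpace ℝ E']
    {H' : Type*} [TopologicalSpace H'] {I' : ModelWithCorners ℝ E' H'}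
    {N : Type*} [TopologicalSpace N] [ChartedSpace H' N] [IsManifold I' ((⊤ : ℕ∞) : WithTop ℕ∞) N]

/-- On a boundaryless manifold, the inverse of the derivative of the inverse extended chart is
the derivative of the extended chart. -/
lemma aux_inverse_symm [I.Boundaryless] (x : M) {y : E} (hy : y ∈ (extChartAt I x).target) :
    (mfderiv 𝓘(ℝ, E) I (extChartAt I x).symm y).inverse
      = mfderiv I 𝓘(ℝ, E) (extChartAt I x) ((extChartAt I x).symm y) := by
  have h1 := mfderiv_extChartAt_comp_mfderivWithin_extChartAt_symm (I := I) hy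
  have h2 := mfderivWithin_extChartAt_symm_comp_mfderiv_extChartAt (I := I) hy
  rw [I.range_eq_univ, mfderivWithin_univ] at h1 h2
  exact ContinuousLinearMap.inverse_eq h2 h1

/-- The coordinate representation of a `C^1` vector field on a boundaryless manifold is
differentiable at the central point of the chart. -/
lemma aux_field_differentiable [I.Boundaryless] (x : M) (V : ∀ p : M, TangentSpace I p)
    (hV : ContMDiffAt I I.tangent 1 (fun p => (⟨p, V p⟩ : TangentBundle I M)) x) :
    DifferentiableAt ℝ
      (fun y => (mfderiv 𝓘(ℝ, E) I (extChartAt I x).symm y).inverse (V ((extChartAt I x).symm y)))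
      (extChartAt I x x) := by
  set G : M → E := fun m => (trivializationAt E (TangentSpace I) x ⟨m, V m⟩).2 with hG
  have hGc : ContMDiffAt I 𝓘(ℝ, E) 1 G x := (Bundle.contMDiffAt_section (s := V) x).1 hV
  have hGd : DifferentiableAt ℝ (G ∘ (extChartAt I x).symm) (extChartAt I x x) := by
    have h := (contMDiffAt_iff.1 hGc).2
    rw [I.range_eq_univ, contDiffWithinAt_univ] at h
    simp only [extChartAt_model_space_eq_id, PartialEquiv.refl_coe, Function.comp_def, id_eq] at h
    exact h.differentiableAt one_ne_zero
  apply hGd.congr_of_eventuallyEq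
  have haT : extChartAt I x x ∈ (extChartAt I x).target :=
    (extChartAt I x).map_source (mem_extChartAt_source x)
  filter_upwards [extChartAt_target_mem_nhds' haT] with y hyT
  have hm : (extChartAt I x).symm y ∈ (extChartAt I x).source := (extChartAt I x).map_target hyT
  have hm' : (extChartAt I x).symm y ∈ (chartAt H x).source := by rwa [← extChartAt_source I]
  rw [aux_inverse_symm x hyT]
  have h1 : mfderiv I 𝓘(ℝ, E) (extChartAt I x) ((extChartAt I x).symm y)
      = mfderiv I I (chartAt H x) ((extChartAt I x).symm y) :=
    (hasMFDerivAt_extChartAt hm').mfderiv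
  rw [h1, mfderiv_chartAt_eq_tangentCoordChange hm']
  rfl

/-- If `V` is `π`-related to `X`, then their coordinate representations are related in the sense
of `fderiv`, near the image of the base point in the chart. -/
lemma aux_related [I.Boundaryless] [I'.Boundaryless]
    (π : M → N) (hπ : ContMDiff I I' (⊤ : ℕ∞) π)
    (V : ∀ p : M, TangentSpace I p) (X : ∀ q : N, TangentSpace I' q)
    (hVX : ∀ p : M, mfderiv I I' π p (V p) = X (π p)) (p : M) :
    ∀ᶠ y in 𝓝 (extChartAt I p p),
      fderiv ℝ (↑(extChartAt I' (π p)) ∘ π ∘ ↑(extChartAt I p).symm) y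
          ((fun y => (mfderiv 𝓘(ℝ, E) I (extChartAt I p).symm y).inverse
              (V ((extChartAt I p).symm y))) y)
        = (fun z => (mfderiv 𝓘(ℝ, E') I' (extChartAt I' (π p)).symm z).inverse
              (X ((extChartAt I' (π p)).symm z)))
            ((↑(extChartAt I' (π p)) ∘ π ∘ ↑(extChartAt I p).symm) y) := by
  set φ := extChartAt I p with hφ
  set ψ := extChartAt I' (π p) with hψ
  have haT : φ p ∈ φ.target := φ.map_source (mem_extChartAt_source p)
  have hππ : ContinuousAt (fun y => π (φ.symm y)) (φ p) := by
    have h1 : ContinuousAt φ.symm (φ p) := continuousAt_extChartAt_symm p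
    exact (hπ.continuous.continuousAt).comp h1
  have h2 : ∀ᶠ y in 𝓝 (φ p), π (φ.symm y) ∈ ψ.source := by
    have hsrc : ψ.source ∈ 𝓝 (π (φ.symm (φ p))) := by
      rw [hφ, extChartAt_to_inv]
      exact extChartAt_source_mem_nhds (π p)
    exact hππ.eventually_mem hsrc
  filter_upwards [extChartAt_target_mem_nhds' haT, h2] with y hyT hyS
  set m := φ.symm y with hm
  have hmS : m ∈ φ.source := φ.map_target hyT
  have hmS' : m ∈ (chartAt H p).source := by rwa [← extChartAt_source I]
  have hπmS' : π m ∈ (chartAt H' (π p)).source := by rwa [← extChartAt_source I']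
  have hdsymm : MDifferentiableAt 𝓘(ℝ, E) I φ.symm y := by
    have h := mdifferentiableWithinAt_extChartAt_symm (I := I) (x := p) hyT
    rwa [I.range_eq_univ, mdifferentiableWithinAt_univ] at h
  have hdπ : MDifferentiableAt I I' π m := (hπ m).mdifferentiableAt (by simp)
  have hdψ : MDifferentiableAt I' 𝓘(ℝ, E') ψ (π m) := mdifferentiableAt_extChartAt hπmS'
  have hchain : fderiv ℝ (↑ψ ∘ π ∘ ↑φ.symm) y
      = (mfderiv I' 𝓘(ℝ, E') ψ (π m)) ∘L ((mfderiv I I' π m) ∘L (mfderiv 𝓘(ℝ, E) I φ.symm y)) := by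
    rw [← mfderiv_eq_fderiv]
    have e1 : mfderiv 𝓘(ℝ, E) 𝓘(ℝ, E') (↑ψ ∘ π ∘ ↑φ.symm) y
        = (mfderiv I' 𝓘(ℝ, E') ψ ((π ∘ ↑φ.symm) y)) ∘L (mfderiv 𝓘(ℝ, E) I' (π ∘ ↑φ.symm) y) :=
      mfderiv_comp y hdψ (hdπ.comp y hdsymm)
    rw [e1, mfderiv_comp y hdπ hdsymm]
    rfl
  have hBA := mfderivWithin_extChartAt_symm_comp_mfderiv_extChartAt (I := I) (x := p) hyT
  rw [I.range_eq_univ, mfderivWithin_univ] at hBA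
  have hinv := aux_inverse_symm p hyT
  rw [hchain, hinv]
  have hBAv : (mfderiv 𝓘(ℝ, E) I φ.symm y) ((mfderiv I 𝓘(ℝ, E) φ (φ.symm y)) (V m)) = V m := by
    exact DFunLike.congr_fun hBA (V m)
  have hfyT : (↑ψ ∘ π ∘ ↑φ.symm) y ∈ ψ.target := by
    simpa using ψ.map_source hyS
  have hinv' := aux_inverse_symm (I := I') (π p) hfyT
  have hsymmfy : ψ.symm ((↑ψ ∘ π ∘ ↑φ.symm) y) = π m := by
    simpa using ψ.left_inv hyS
  rw [hinv', hsymmfy]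
  show mfderiv I' 𝓘(ℝ, E') ψ (π m) ((mfderiv I I' π m)
      ((mfderiv 𝓘(ℝ, E) I φ.symm y) ((mfderiv I 𝓘(ℝ, E) φ (φ.symm y)) (V m))))
    = mfderiv I' 𝓘(ℝ, E') ψ (π m) (X (π m))
  rw [hBAv, hVX m]

/-- `mpullbackWithin` over `univ`, as a function. -/
lemma aux_mpullback_univ {𝕜 : Type*} [NontriviallyNormedField 𝕜]
    {E : Type*} [NormedAddCommGroup E] [NormedSpace 𝕜 E]
    {H : Type*} [TopologicalSpace H] (I : ModelWithCorners 𝕜 E H)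
    {M : Type*} [TopologicalSpace M] [ChartedSpace H M]
    {E' : Type*} [NormedAddCommGroup E'] [NormedSpace 𝕜 E']
    {H' : Type*} [TopologicalSpace H'] (I' : ModelWithCorners 𝕜 E' H')
    {M' : Type*} [TopologicalSpace M'] [ChartedSpace H' M']
    (f : M → M') (V : ∀ x : M', TangentSpace I' x) :
    mpullbackWithin I I' f V univ = fun x => (mfderiv I I' f x).inverse (V (f x)) := by
  funext x
  rw [mpullbackWithin, mfderivWithin_univ]

end ManifoldAux


/-- If the smooth vector fields `V`, `W` on `M` are `π`-related to the smooth vector fields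
`X`, `Y` on `N` respectively, for a smooth map `π : M → N`, then the Lie bracket `[V, W]`
is `π`-related to `[X, Y]`. -/
theorem mlieBracket_pi_related
    {E : Type*} [NormedAddCommGroup E] [NormedSpace ℝ E] [FiniteDimensional ℝ E]
    {H : Type*} [TopologicalSpace H] (I : ModelWithCorners ℝ E H)
    {M : Type*} [TopologicalSpace M] [ChartedSpace H M] [IsManifold I ((⊤ : ℕ∞) : WithTop ℕ∞) M]
    [I.Boundaryless]
    {E' : Type*} [NormedAddCommGroup E'] [NormedSpace ℝ E'] [FiniteDimensional ℝ E']
    {H' : Type*} [TopologicalSpace H'] (I' : ModelWithCorners ℝ E' H')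
    {N : Type*} [TopologicalSpace N] [ChartedSpace H' N] [IsManifold I' ((⊤ : ℕ∞) : WithTop ℕ∞) N]
    [I'.Boundaryless]
    (π : M → N) (hπ : ContMDiff I I' (⊤ : ℕ∞) π)
    (V W : ∀ p : M, TangentSpace I p) (X Y : ∀ q : N, TangentSpace I' q)
    (hV : ContMDiff I I.tangent (⊤ : ℕ∞) (fun p : M => (⟨p, V p⟩ : TangentBundle I M)))
    (hW : ContMDiff I I.tangent (⊤ : ℕ∞) (fun p : M => (⟨p, W p⟩ : TangentBundle I M)))
    (hX : ContMDiff I' I'.tangent (⊤ : ℕ∞) (fun q : N => (⟨q, X q⟩ : TangentBundle I' N)))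
    (hY : ContMDiff I' I'.tangent (⊤ : ℕ∞) (fun q : N => (⟨q, Y q⟩ : TangentBundle I' N)))
    (hVX : ∀ p : M, mfderiv I I' π p (V p) = X (π p))
    (hWY : ∀ p : M, mfderiv I I' π p (W p) = Y (π p)) :
    ∀ p : M, mfderiv I I' π p (mlieBracket I V W p) = mlieBracket I' X Y (π p) := by
  intro p
  have hp : p ∈ (extChartAt I p).source := mem_extChartAt_source p
  have hπp : π p ∈ (extChartAt I' (π p)).source := mem_extChartAt_source (π p)
  -- unfold the definitions, using that all the relevant sets are `univ`
  have hsetM : (((extChartAt I p).symm ⁻¹' (univ : Set M)) ∩ range I) = univ := by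
    rw [preimage_univ, univ_inter, I.range_eq_univ]
  have hsetN : (((extChartAt I' (π p)).symm ⁻¹' (univ : Set N)) ∩ range I') = univ := by
    rw [preimage_univ, univ_inter, I'.range_eq_univ]
  rw [mlieBracket, mlieBracket, mlieBracketWithin, mlieBracketWithin]
  rw [hsetM, hsetN]
  simp only [mpullbackWithin, mfderivWithin_univ, VectorField.lieBracketWithin_univ,
    aux_mpullback_univ]
  -- names for the different derivatives involved
  have hApinv : (mfderiv I 𝓘(ℝ, E) (extChartAt I p) p).inverse = mfderiv 𝓘(ℝ, E) I (extChartAt I p).symm (extChartAt I p p) := by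
    have h1 := mfderiv_extChartAt_comp_mfderivWithin_extChartAt_symm' (I := I) hp
    have h2 := mfderivWithin_extChartAt_symm_comp_mfderiv_extChartAt' (I := I) hp
    rw [I.range_eq_univ, mfderivWithin_univ] at h1 h2
    exact ContinuousLinearMap.inverse_eq h1 h2
  have hBpinv : (mfderiv I' 𝓘(ℝ, E') (extChartAt I' (π p)) (π p)).inverse = mfderiv 𝓘(ℝ, E') I' (extChartAt I' (π p)).symm (extChartAt I' (π p) (π p)) := by
    have h1 := mfderiv_extChartAt_comp_mfderivWithin_extChartAt_symm' (I := I') hπp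
    have h2 := mfderivWithin_extChartAt_symm_comp_mfderiv_extChartAt' (I := I') hπp
    rw [I'.range_eq_univ, mfderivWithin_univ] at h1 h2
    exact ContinuousLinearMap.inverse_eq h1 h2
  rw [hApinv, hBpinv]
  -- the map in charts, and its regularity
  set f : E → E' := ↑(extChartAt I' (π p)) ∘ π ∘ ↑(extChartAt I p).symm with hf
  have hfa : f (extChartAt I p p) = extChartAt I' (π p) (π p) := by
    rw [hf]
    simp only [Function.comp_apply, extChartAt_to_inv]
  have hf2 : ContDiffAt ℝ 2 f (extChartAt I p p) := by
    have h := (contMDiffAt_iff.1 (hπ p)).2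
    rw [I.range_eq_univ, contDiffWithinAt_univ] at h
    exact h.of_le (by norm_cast)
  -- differentiability of the coordinate representations of the vector fields
  have hVc := aux_field_differentiable (I := I) p V ((hV p).of_le (by exact_mod_cast le_top))
  have hWc := aux_field_differentiable (I := I) p W ((hW p).of_le (by exact_mod_cast le_top))
  have hXc := aux_field_differentiable (I := I') (π p) X ((hX (π p)).of_le (by exact_mod_cast le_top))
  have hYc := aux_field_differentiable (I := I') (π p) Y ((hY (π p)).of_le (by exact_mod_cast le_top))
  rw [← hfa] at hXc hYc
  -- the flat fields are `f`-related near `extChartAt I p p`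
  have evV := aux_related (I := I) (I' := I') π hπ V X hVX p
  have evW := aux_related (I := I) (I' := I') π hπ W Y hWY p
  -- hence their Lie brackets are related at `extChartAt I p p`
  have key := flat_bracket_related hf2 hVc hWc hXc hYc evV evW
  rw [hfa] at key
  erw [VectorField.lieBracketWithin_univ, VectorField.lieBracketWithin_univ]
  rw [← key]
  -- the chain rule at `extChartAt I p p`
  have hdsymm : MDifferentiableAt 𝓘(ℝ, E) I (extChartAt I p).symm (extChartAt I p p) := by
    have h := mdifferentiableWithinAt_extChartAt_symm (I := I) (x := p) ((extChartAt I p).map_source hp)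
    rwa [I.range_eq_univ, mdifferentiableWithinAt_univ] at h
  have hpa : (extChartAt I p).symm (extChartAt I p p) = p := (extChartAt I p).left_inv hp
  have hdπ : MDifferentiableAt I I' π ((extChartAt I p).symm (extChartAt I p p)) := by
    rw [hpa]; exact (hπ p).mdifferentiableAt (by simp)
  have hdψ : MDifferentiableAt I' 𝓘(ℝ, E') (extChartAt I' (π p)) (π ((extChartAt I p).symm (extChartAt I p p))) := by
    rw [hpa]
    exact mdifferentiableAt_extChartAt (by rwa [← extChartAt_source I'])
  have hchain : fderiv ℝ f (extChartAt I p p)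
      = (mfderiv I' 𝓘(ℝ, E') (extChartAt I' (π p)) (π ((extChartAt I p).symm (extChartAt I p p)))) ∘L ((mfderiv I I' π ((extChartAt I p).symm (extChartAt I p p)))
          ∘L (mfderiv 𝓘(ℝ, E) I (extChartAt I p).symm (extChartAt I p p))) := by
    rw [← mfderiv_eq_fderiv, hf]
    have e1 : mfderiv 𝓘(ℝ, E) 𝓘(ℝ, E') (↑(extChartAt I' (π p)) ∘ π ∘ ↑(extChartAt I p).symm) (extChartAt I p p)
        = (mfderiv I' 𝓘(ℝ, E') (extChartAt I' (π p)) ((π ∘ ↑(extChartAt I p).symm) (extChartAt I p p)))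
            ∘L (mfderiv 𝓘(ℝ, E) I' (π ∘ ↑(extChartAt I p).symm) (extChartAt I p p)) :=
      mfderiv_comp (extChartAt I p p) hdψ (hdπ.comp (extChartAt I p p) hdsymm)
    rw [e1, mfderiv_comp (extChartAt I p p) hdπ hdsymm]
    rfl
  rw [hchain, hpa]
  have hB'A' := mfderivWithin_extChartAt_symm_comp_mfderiv_extChartAt' (I := I') hπp
  rw [I'.range_eq_univ, mfderivWithin_univ] at hB'A'
  exact (DFunLike.congr_fun hB'A' _).symm


end
end

section
/- Let Σ be a complex inner product space and let c₁, …, cₙ be continuous linear operators on Σ that are skew-adjoint (⟨cᵢφ, ψ⟩ = −⟨φ, cᵢψ⟩ for all φ, ψ ∈ Σ) and satisfy the Clifford relations cᵢ ∘ cⱼ + cⱼ ∘ cᵢ = −2δᵢⱼ·id. Let h be a real symmetric n×n matrix, let ψ ∈ Σ with ψ ≠ 0, and for each j define ∇ⱼψ := −(1/2) ∑ₖ h_{jk} cₖ ψ. Then for all indices i, j, the energy-momentum tensor T^ψ_{ij} := (1/2)·Re ⟨cᵢ(∇ⱼψ) + cⱼ(∇ᵢψ), ψ⟩ / ‖ψ‖²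 equals (1/2) h_{ij}. (This is the algebraic core of the fact that for a hypersurface of a manifold with a parallel spinor, the energy-momentum tensor of the restricted spinor equals half the second fundamental form, 2T^ψ = h.) -/
open scoped InnerProductSpace

/-- Algebraic core of `2T^ψ = h`: if the restriction `ψ` of a parallel spinor to a
hypersurface satisfies the spinorial Gauss formula `∇ⱼψ = −(1/2)∑ₖ h_{jk} cₖψ`, then its
energy-momentum tensor `T^ψ_{ij} = (1/2)·Re⟨cᵢ(∇ⱼψ) + cⱼ(∇ᵢψ), ψ⟩/‖ψ‖²` equals `(1/2)h_{ij}`. -/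
theorem energy_momentum_eq_half_second_fundamental_form (n : ℕ) (Spinor : Type*)
    [NormedAddCommGroup Spinor] [InnerProductSpace ℂ Spinor]
    (c : Fin n → (Spinor →L[ℂ] Spinor))
    (hskew : ∀ i (φ ψ : Spinor), ⟪c i φ, ψ⟫_ℂ = -⟪φ, c i ψ⟫_ℂ)
    (hclifford : ∀ i j, (c i).comp (c j) + (c j).comp (c i) =
      if i = j then (-2 : ℂ) • ContinuousLinearMap.id ℂ Spinor else 0)
    (h : Matrix (Fin n) (Fin n) ℝ) (hsymm : ∀ i j, h i j = h j i)
    (ψ : Spinor) (hψ : ψ ≠ 0)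
    (grad : Fin n → Spinor)
    (hgrad : ∀ j, grad j = -(1 / 2 : ℝ) • ∑ k, h j k • c k ψ) :
    ∀ i j, (1 / 2 : ℝ) * (⟪c i (grad j) + c j (grad i), ψ⟫_ℂ).re / ‖ψ‖ ^ 2 =
      (1 / 2 : ℝ) * h i j := by
  have hnorm : (‖ψ‖ : ℝ) ^ 2 ≠ 0 := pow_ne_zero _ (norm_ne_zero_iff.mpr hψ)
  -- Re⟪cᵢ(cₖψ), ψ⟫ = -δᵢₖ ‖ψ‖²
  have key : ∀ i k : Fin n, (⟪c i (c k ψ), ψ⟫_ℂ).re =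
      if i = k then -‖ψ‖ ^ 2 else 0 := by
    intro i k
    have hconj : ⟪c k (c i ψ), ψ⟫_ℂ = starRingEnd ℂ ⟪c i (c k ψ), ψ⟫_ℂ := by
      rw [hskew k, hskew i, neg_neg]
      exact (inner_conj_symm _ _).symm
    have hsum : ⟪c i (c k ψ), ψ⟫_ℂ + ⟪c k (c i ψ), ψ⟫_ℂ =
        (if i = k then (-2 : ℂ) else 0) * ((‖ψ‖ ^ 2 : ℝ) : ℂ) := by
      have := congrArg (fun T : Spinor →L[ℂ] Spinor => ⟪T ψ, ψ⟫_ℂ) (hclifford i k)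
      simp only [ContinuousLinearMap.add_apply, ContinuousLinearMap.comp_apply,
        inner_add_left] at this
      rw [this]
      by_cases hik : i = k <;>
        simp [hik, inner_smul_left, inner_self_eq_norm_sq_to_K, map_ofNat,
          Complex.ofReal_pow]
    have h2 : (2 : ℝ) * (⟪c i (c k ψ), ψ⟫_ℂ).re =
        (if i = k then (-2 : ℝ) else 0) * ‖ψ‖ ^ 2 := by
      have := congrArg Complex.re hsum
      rw [hconj] at this
      simp only [Complex.add_re, Complex.conj_re] at this
      rw [show (⟪c i (c k ψ), ψ⟫_ℂ).re + (⟪c i (c k ψ), ψ⟫_ℂ).re =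
        2 * (⟪c i (c k ψ), ψ⟫_ℂ).re by ring] at this
      rw [this]
      by_cases hik : i = k <;> simp [hik, ← Complex.ofReal_pow]
    by_cases hik : i = k <;> simp [hik] at h2 ⊢ <;> linarith
  have hre_smul : ∀ (r : ℝ) (x y : Spinor), (⟪r • x, y⟫_ℂ).re = r * (⟪x, y⟫_ℂ).re := by
    intro r x y
    rw [RCLike.real_smul_eq_coe_smul (K := ℂ), inner_smul_real_left, Complex.smul_re,
      smul_eq_mul]
  -- expand ⟪c i (grad j), ψ⟫.re
  have expand : ∀ i j : Fin n, (⟪c i (grad j), ψ⟫_ℂ).re =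
      (1 / 2 : ℝ) * h j i * ‖ψ‖ ^ 2 := by
    intro i j
    rw [hgrad, ContinuousLinearMap.map_smul_of_tower, map_sum, hre_smul]
    have hc : ∀ k : Fin n, c i (h j k • c k ψ) = h j k • c i (c k ψ) := fun k =>
      ContinuousLinearMap.map_smul_of_tower _ _ _
    simp_rw [hc]
    rw [show (⟪∑ k, h j k • c i (c k ψ), ψ⟫_ℂ) = ∑ k, ⟪h j k • c i (c k ψ), ψ⟫_ℂ
      from sum_inner _ _ _]
    rw [Complex.re_sum]
    have : ∀ k : Fin n, (⟪h j k • c i (c k ψ), ψ⟫_ℂ).re =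
        h j k * (if i = k then -‖ψ‖ ^ 2 else 0) := by
      intro k
      rw [hre_smul, key]
    simp_rw [this, mul_ite, mul_zero]
    rw [Finset.sum_ite_eq Finset.univ i (fun k => h j k * -‖ψ‖ ^ 2)]
    simp
    ring
  intro i j
  rw [inner_add_left]
  simp only [Complex.add_re]
  rw [expand, expand, hsymm j i]
  field_simp
  ring
end
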